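/- Under the kernel hypotheses, the points s_1, …, s_m necessarily satisfy the Bethe equations: for every i ∈ {1,…,m}, V′(s_i) = 2ħ ∑_{j≠i} 1/(s_i − s_j). In other words, the existence, for all x₀, of a recursion kernel K(x₀,·) analytic at all the s_i and solving the defining differential equation forces the s_i to be Bethe roots. -/

import Mathlib

/-!
Near `a = s i` write `2ω - V′ = 2ħ/(x - a) + R` and `G(x₀, ·) = c(x₀)/(x - a) + h_{x₀}` with `R`,
`h_{x₀}` regular at `a`. The pole `2ħ/(x - a)` has indicial exponent `2`, which is resonant: the
Taylor coefficients of orders `0` and `1` of `(x - a) · (ODE)` fix `K(a)` and `K'(a)`, while in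
the order-`2` coefficient `K''(a)` cancels, leaving a constraint
`2ħ² h_{x₀}'(a) = ħ (R'(a) c(x₀) + 2 R(a) h_{x₀}(a)) - R(a)² c(x₀)` for every `x₀ ∉ S`.
As `x₀ → ∞`, `h_{x₀}(a) ~ -1/x₀` while `c(x₀)` and `h_{x₀}'(a)` are `O(1/x₀²)`, so
`ħ R(a) = 0`; and `R(a) = 0` is the Bethe equation at `s i`.
-/

open Finset Polynomial

open Filter Topology Bornology

section LocalAnalysis

variable {𝕜 : Type*} [NontriviallyNormedField 𝕜] {f g : 𝕜 → 𝕜} {a : 𝕜}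

theorem deriv_eq_of_eventuallyEq_sub_mul (hg : DifferentiableAt 𝕜 g a)
    (hf : f =ᶠ[𝓝 a] fun x => (x - a) * g x) : deriv f a = g a := by
  rw [hf.deriv_eq, (((hasDerivAt_id' a).sub_const a).fun_mul hg.hasDerivAt).deriv]
  simp

theorem deriv_deriv_eq_of_eventuallyEq_sub_mul [CompleteSpace 𝕜] (hg : AnalyticAt 𝕜 g a)
    (hf : f =ᶠ[𝓝 a] fun x => (x - a) * g x) : deriv (deriv f) a = 2 * deriv g a := by
  have hf' : deriv f =ᶠ[𝓝 a] fun x => g x + (x - a) * deriv g x := by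
    filter_upwards [hf.deriv, hg.eventually_analyticAt] with x hfx hgx
    rw [hfx, (((hasDerivAt_id' x).sub_const a).fun_mul hgx.differentiableAt.hasDerivAt).deriv]
    simp
  rw [hf'.deriv_eq, ((hg.differentiableAt.hasDerivAt).fun_add
    (((hasDerivAt_id' a).sub_const a).fun_mul hg.deriv.differentiableAt.hasDerivAt)).deriv]
  ring

theorem resonance_constraint [CompleteSpace 𝕜] {hbar c : 𝕜} {K R h : 𝕜 → 𝕜}
    (hK : AnalyticAt 𝕜 K a) (hR : AnalyticAt 𝕜 R a) (hh : AnalyticAt 𝕜 h a)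
    (hode : ∀ᶠ x in 𝓝[≠] a,
      hbar * deriv K x = (2 * hbar / (x - a) + R x) * K x - (c / (x - a) + h x)) :
    2 * hbar ^ 2 * deriv h a = hbar * (deriv R a * c + 2 * R a * h a) - R a ^ 2 * c := by
  set N : 𝕜 → 𝕜 := fun x => hbar * deriv K x - R x * K x + h x
  have hK' : AnalyticAt 𝕜 (deriv K) a := hK.deriv
  have hN : AnalyticAt 𝕜 N a :=
    ((analyticAt_const.fun_mul hK').fun_sub (hR.fun_mul hK)).fun_add hh
  have hfactor : (fun x => 2 * hbar * K x - c) =ᶠ[𝓝 a] fun x => (x - a) * N x := by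
    refine (ContinuousAt.eventuallyEq_nhds_iff_eventuallyEq_nhdsNE
      (by fun_prop) (by fun_prop)).1 ?_
    filter_upwards [hode, self_mem_nhdsWithin] with x hx hxa
    have hxa : x - a ≠ 0 := sub_ne_zero.2 hxa
    simp only [N]
    field_simp at hx
    linear_combination -hx
  have hKa : 2 * hbar * K a - c = 0 := by simpa using hfactor.eq_of_nhds
  have hK'a : 2 * hbar * deriv K a = N a := by
    simpa using deriv_eq_of_eventuallyEq_sub_mul hN.differentiableAt hfactor
  have hK''a : 2 * hbar * deriv (deriv K) a = 2 * deriv N a := by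
    simpa using deriv_deriv_eq_of_eventuallyEq_sub_mul hN hfactor
  rw [(((hK'.differentiableAt.hasDerivAt.const_mul hbar).fun_sub
    (hR.differentiableAt.hasDerivAt.fun_mul hK.differentiableAt.hasDerivAt)).fun_add
    hh.differentiableAt.hasDerivAt).deriv] at hK''a
  simp only [N] at hK'a
  linear_combination (-hbar ^ 2) * hK''a + (hbar * deriv R a - R a ^ 2) * hKa
    + 2 * hbar * R a * hK'a

end LocalAnalysis

section Asymptotics

variable {𝕜 : Type*} [NormedField 𝕜]

theorem tendsto_inv_sub_cobounded (b : 𝕜) :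
    Tendsto (fun t => (t - b)⁻¹) (cobounded 𝕜) (𝓝 0) :=
  tendsto_inv₀_cobounded.comp (tendsto_sub_const_cobounded b)

theorem tendsto_sub_mul_inv_sub_sq (a b : 𝕜) :
    Tendsto (fun t => (t - a) * ((t - b) ^ 2)⁻¹) (cobounded 𝕜) (𝓝 0) := by
  have h : ∀ t, (t - a) * ((t - b) ^ 2)⁻¹ = (t - b)⁻¹ + (b - a) * (t - b)⁻¹ ^ 2 := by
    intro t
    rcases eq_or_ne (t - b) 0 with htb | htb
    · simp [htb]
    · field_simp
      ring
  simp only [h]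
  simpa using (tendsto_inv_sub_cobounded b).add
    (((tendsto_inv_sub_cobounded b).pow 2).const_mul (b - a))

theorem tendsto_sub_mul_sum_inv_sub_sq {ι : Type*} (u : Finset ι) (a : 𝕜) (w b : ι → 𝕜) :
    Tendsto (fun t => (t - a) * ∑ j ∈ u, w j * ((t - b j) ^ 2)⁻¹) (cobounded 𝕜) (𝓝 0) := by
  simp only [mul_sum, mul_left_comm (_ - a)]
  simpa using tendsto_finsetSum u fun j _ =>
    (tendsto_sub_mul_inv_sub_sq a (b j)).const_mul (w j)

end Asymptotics

theorem analyticAt_sum_div_sub {𝕜 ι : Type*} [NontriviallyNormedField 𝕜] (u : Finset ι)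
    (w b : ι → 𝕜) {a : 𝕜} (ha : ∀ k ∈ u, a ≠ b k) :
    AnalyticAt 𝕜 (fun x => ∑ k ∈ u, w k / (x - b k)) a :=
  Finset.analyticAt_fun_sum u fun k hk =>
    analyticAt_const.div (analyticAt_id.sub analyticAt_const) (sub_ne_zero.2 (ha k hk))

noncomputable section

variable {m : ℕ} (hbar : ℂ) (V : ℂ[X]) (A : Matrix (Fin m) (Fin m) ℂ) (s : Fin m → ℂ)
  (i : Fin m)

-- In the notation of the statement, `2ω - V′ = 2ħ/(x - s i) + regularPotential` and
-- `G(x₀, ·) = sourceResidue x₀ / (x - s i) + regularSource x₀`.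

def regularPotential (x : ℂ) : ℂ :=
  2 * hbar * ∑ j ∈ univ.erase i, 1 / (x - s j) - V.derivative.eval x

def sourceResidue (x₀ : ℂ) : ℂ := ∑ j, 2 * A i j * ((x₀ - s j) ^ 2)⁻¹

def regularSourceCoeff (j : Fin m) (x : ℂ) : ℂ := 2 * ∑ k ∈ univ.erase i, A k j / (x - s k)

def regularSource (x₀ x : ℂ) : ℂ :=
  (x - x₀)⁻¹ + ∑ j, regularSourceCoeff A s i j x * ((x₀ - s j) ^ 2)⁻¹

theorem potential_eq_pole_add_regularPotential (x : ℂ) :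
    2 * (hbar * ∑ j, 1 / (x - s j)) - V.derivative.eval x
      = 2 * hbar / (x - s i) + regularPotential hbar V s i x := by
  rw [← add_sum_erase _ _ (mem_univ i), regularPotential]
  ring

theorem source_eq_residue_div_add_regularSource (x₀ x : ℂ) :
    1 / (x - x₀) + 2 * ∑ k, ∑ j, A k j / ((x - s k) * (x₀ - s j) ^ 2)
      = sourceResidue A s i x₀ / (x - s i) + regularSource A s i x₀ x := by
  simp only [sourceResidue, regularSource, regularSourceCoeff, div_eq_mul_inv, mul_inv, one_mul,
    mul_sum, sum_mul]
  rw [sum_comm (s := univ) (t := univ.erase i), ← add_sum_erase _ _ (mem_univ i), add_left_comm]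
  congr 1
  · exact sum_congr rfl fun _ _ => by ring
  · exact congrArg _ (sum_congr rfl fun _ _ => sum_congr rfl fun _ _ => by ring)

theorem tendsto_sub_mul_sourceResidue (x : ℂ) :
    Tendsto (fun t => (t - x) * sourceResidue A s i t) (cobounded ℂ) (𝓝 0) :=
  tendsto_sub_mul_sum_inv_sub_sq univ x _ s

theorem tendsto_sub_mul_regularSource (x : ℂ) :
    Tendsto (fun t => (t - x) * regularSource A s i t x) (cobounded ℂ) (𝓝 (-1)) := by
  have hpole : ∀ᶠ t in cobounded ℂ, -1 = (t - x) * (x - t)⁻¹ := by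
    filter_upwards [eventually_ne_cobounded x] with t ht
    rw [← neg_sub, neg_mul, mul_inv_cancel₀ (sub_ne_zero.2 ht.symm)]
  simpa [regularSource, mul_add] using (tendsto_const_nhds.congr' hpole).add
    (tendsto_sub_mul_sum_inv_sub_sq univ x (regularSourceCoeff A s i · x) s)

variable {A s i}

theorem analyticAt_regularPotential {x : ℂ} (hx : ∀ k ∈ univ.erase i, x ≠ s k) :
    AnalyticAt ℂ (regularPotential hbar V s i) x :=
  (analyticAt_const.fun_mul (analyticAt_sum_div_sub (univ.erase i) (fun _ => 1) s hx)).fun_sub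
    (V.derivative.differentiable.analyticAt _)

theorem analyticAt_regularSourceCoeff {x : ℂ} (hx : ∀ k ∈ univ.erase i, x ≠ s k) (j : Fin m) :
    AnalyticAt ℂ (regularSourceCoeff A s i j) x :=
  analyticAt_const.fun_mul (analyticAt_sum_div_sub (univ.erase i) (A · j) s hx)

theorem hasDerivAt_regularSource {x₀ x : ℂ} (hx : ∀ k ∈ univ.erase i, x ≠ s k) (hx₀ : x ≠ x₀) :
    HasDerivAt (regularSource A s i x₀)
      (-1 / (x - x₀) ^ 2 + ∑ j, deriv (regularSourceCoeff A s i j) x * ((x₀ - s j) ^ 2)⁻¹) x :=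
  (((hasDerivAt_id' x).sub_const x₀).fun_inv (sub_ne_zero.2 hx₀)).fun_add
    (HasDerivAt.fun_sum fun j _ =>
      ((analyticAt_regularSourceCoeff hx j).differentiableAt.hasDerivAt).mul_const _)

theorem analyticAt_regularSource {x₀ x : ℂ} (hx : ∀ k ∈ univ.erase i, x ≠ s k) (hx₀ : x ≠ x₀) :
    AnalyticAt ℂ (regularSource A s i x₀) x :=
  (analyticAt_id.sub analyticAt_const).fun_inv (sub_ne_zero.2 hx₀) |>.fun_add
    (Finset.analyticAt_fun_sum _ fun j _ =>
      (analyticAt_regularSourceCoeff hx j).fun_mul analyticAt_const)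

theorem tendsto_sub_mul_deriv_regularSource {x : ℂ} (hx : ∀ k ∈ univ.erase i, x ≠ s k) :
    Tendsto (fun t => (t - x) * deriv (regularSource A s i t) x) (cobounded ℂ) (𝓝 0) := by
  have hderiv : ∀ᶠ t in cobounded ℂ, -((t - x) * ((t - x) ^ 2)⁻¹)
      + (t - x) * ∑ j, deriv (regularSourceCoeff A s i j) x * ((t - s j) ^ 2)⁻¹
      = (t - x) * deriv (regularSource A s i t) x := by
    filter_upwards [eventually_ne_cobounded x] with t ht
    rw [(hasDerivAt_regularSource hx ht.symm).deriv, ← neg_sq (t - x), neg_sub]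
    ring
  simpa using ((tendsto_sub_mul_inv_sub_sq x x).neg.add
    (tendsto_sub_mul_sum_inv_sub_sq univ x _ s)).congr' hderiv

theorem resonance_constraint_of_kernel (hs : Function.Injective s) {x₀ : ℂ}
    (hx₀ : ∀ j, x₀ ≠ s j) {U : Set ℂ} {K : ℂ → ℂ} (hU : IsOpen U) (hsU : ∀ j, s j ∈ U)
    (hK : DifferentiableOn ℂ K U)
    (hode : ∀ x ∈ U, (∀ j, x ≠ s j) → x ≠ x₀ →
      hbar * deriv K x = (2 * (hbar * ∑ j, 1 / (x - s j)) - V.derivative.eval x) * K x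
        - (1 / (x - x₀) + 2 * ∑ k, ∑ j, A k j / ((x - s k) * (x₀ - s j) ^ 2))) :
    2 * hbar ^ 2 * deriv (regularSource A s i x₀) (s i)
      = hbar * (deriv (regularPotential hbar V s i) (s i) * sourceResidue A s i x₀
          + 2 * regularPotential hbar V s i (s i) * regularSource A s i x₀ (s i))
        - regularPotential hbar V s i (s i) ^ 2 * sourceResidue A s i x₀ := by
  have hsi : ∀ k ∈ univ.erase i, s i ≠ s k := fun _ hk => hs.ne (ne_of_mem_erase hk).symm
  refine resonance_constraint (hK.analyticAt (hU.mem_nhds (hsU i)))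
    (analyticAt_regularPotential hbar V hsi) (analyticAt_regularSource hsi (hx₀ i).symm) ?_
  have hpoles : ∀ᶠ x in 𝓝[≠] s i, ∀ j, x ≠ s j := by
    refine eventually_all.2 fun j => ?_
    rcases eq_or_ne j i with rfl | hj
    · exact eventually_mem_nhdsWithin
    · exact eventually_nhdsWithin_of_eventually_nhds (eventually_ne_nhds (hs.ne hj).symm)
  filter_upwards [hpoles, eventually_nhdsWithin_of_eventually_nhds (hU.mem_nhds (hsU i)),
    eventually_nhdsWithin_of_eventually_nhds (eventually_ne_nhds (hx₀ i).symm)]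
    with x hxs hxU hxx₀
  rw [← potential_eq_pole_add_regularPotential, ← source_eq_residue_div_add_regularSource]
  exact hode x hxU hxs hxx₀

theorem regularPotential_eq_zero_of_resonance_constraint (hhbar : hbar ≠ 0)
    (hs : Function.Injective s)
    (hconstr : ∀ᶠ x₀ in cobounded ℂ, 2 * hbar ^ 2 * deriv (regularSource A s i x₀) (s i)
      = hbar * (deriv (regularPotential hbar V s i) (s i) * sourceResidue A s i x₀
          + 2 * regularPotential hbar V s i (s i) * regularSource A s i x₀ (s i))
        - regularPotential hbar V s i (s i) ^ 2 * sourceResidue A s i x₀) :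
    regularPotential hbar V s i (s i) = 0 := by
  set R := regularPotential hbar V s i
  have hsi : ∀ k ∈ univ.erase i, s i ≠ s k := fun _ hk => hs.ne (ne_of_mem_erase hk).symm
  have hlim := (((tendsto_sub_mul_sourceResidue A s i (s i)).const_mul (deriv R (s i))).add
      ((tendsto_sub_mul_regularSource A s i (s i)).const_mul (2 * R (s i)))).const_mul hbar
    |>.sub ((tendsto_sub_mul_sourceResidue A s i (s i)).const_mul (R (s i) ^ 2))
    |>.sub ((tendsto_sub_mul_deriv_regularSource (A := A) hsi).const_mul (2 * hbar ^ 2))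
  have hzero : ∀ᶠ t in cobounded ℂ,
      0 = hbar * (deriv R (s i) * ((t - s i) * sourceResidue A s i t)
      + 2 * R (s i) * ((t - s i) * regularSource A s i t (s i)))
      - R (s i) ^ 2 * ((t - s i) * sourceResidue A s i t)
      - 2 * hbar ^ 2 * ((t - s i) * deriv (regularSource A s i t) (s i)) := by
    filter_upwards [hconstr] with t ht
    linear_combination (t - s i) * ht
  have := tendsto_nhds_unique (tendsto_const_nhds.congr' hzero) hlim
  simpa [hhbar] using this.symm

end

theorem kernel_existence_implies_bethe (m : ℕ) (hbar : ℂ) (hhbar : hbar ≠ 0)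
    (V : Polynomial ℂ) (s : Fin m → ℂ) (hs : Function.Injective s)
    (A : Matrix (Fin m) (Fin m) ℂ)
    (hker : ∀ x₀ : ℂ, (∀ i, x₀ ≠ s i) →
      ∃ (U : Set ℂ) (K : ℂ → ℂ), IsOpen U ∧ (∀ i, s i ∈ U) ∧
        DifferentiableOn ℂ K U ∧
        ∀ x ∈ U, (∀ i, x ≠ s i) → x ≠ x₀ →
          hbar * deriv K x
            = (2 * (hbar * ∑ i, 1 / (x - s i)) - V.derivative.eval x) * K x
              - (1 / (x - x₀) + 2 * ∑ i, ∑ j, A i j / ((x - s i) * (x₀ - s j) ^ 2))) :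
    ∀ i, V.derivative.eval (s i) = 2 * hbar * ∑ j ∈ univ.erase i, 1 / (s i - s j) := by
  intro i
  have hreg : regularPotential hbar V s i (s i) = 0 := by
    refine regularPotential_eq_zero_of_resonance_constraint hbar V (A := A) hhbar hs ?_
    filter_upwards [eventually_all.2 fun j => eventually_ne_cobounded (s j)] with x₀ hx₀
    obtain ⟨U, K, hU, hsU, hK, hode⟩ := hker x₀ hx₀
    exact resonance_constraint_of_kernel hbar V hs hx₀ hU hsU hK hode
  rw [regularPotential, sub_eq_zero] at hreg
  exact hreg.symm
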